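/- arXiv:1806.02775 — 2 statements merged into one kernel-verified Lean document; each statement's English description precedes it below -/
import Mathlib

section
/- Let d ≥ 1 and let p, ρ : ℝ^d → ℝ be positive functions that are differentiable at a point x, let φ : ℝ^d → ℝ^d be differentiable at x, and set w(x) = ρ(x)/p(x). Then w(x)·(⟨∇log ρ(x), φ(x)⟩ + div φ(x)) = ⟨∇log p(x), w(x)·φ(x)⟩ + div(w·φ)(x), i.e. w(x)·(S_ρᵀφ)(x) = (S_pᵀ(w·φ))(x). (Theorem 1 of the paper, pointwise identity.) -/
open Real MeasureTheory
open scoped InnerProductSpace BigOperators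

/-- Divergence of a vector field: trace of the Fréchet derivative. -/
noncomputable def divg {d : ℕ} (f : EuclideanSpace ℝ (Fin d) → EuclideanSpace ℝ (Fin d))
    (x : EuclideanSpace ℝ (Fin d)) : ℝ :=
  LinearMap.trace ℝ _ (fderiv ℝ f x : EuclideanSpace ℝ (Fin d) →ₗ[ℝ] EuclideanSpace ℝ (Fin d))

/-! Writing `ρ = w p`, the score of `ρ` is the score of `p` plus `∇w / w`, and the product rule
`div (w φ) = w div φ + ⟨∇w, φ⟩` produces exactly that extra term on the right-hand side. -/

section

variable {d : ℕ} {x : EuclideanSpace ℝ (Fin d)}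

theorem divg_smul {w : EuclideanSpace ℝ (Fin d) → ℝ}
    {φ : EuclideanSpace ℝ (Fin d) → EuclideanSpace ℝ (Fin d)}
    (hw : DifferentiableAt ℝ w x) (hφ : DifferentiableAt ℝ φ x) :
    divg (fun y => w y • φ y) x = w x * divg φ x + fderiv ℝ w x (φ x) := by
  simp only [divg, fderiv_fun_smul hw hφ, ContinuousLinearMap.toLinearMap_add,
    ContinuousLinearMap.toLinearMap_smul, map_add, map_smul, smul_eq_mul]
  congr 1
  exact LinearMap.trace_smulRight _ _

theorem inner_gradient_log {f : EuclideanSpace ℝ (Fin d) → ℝ} (hf : DifferentiableAt ℝ f x)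
    (hfx : f x ≠ 0) (v : EuclideanSpace ℝ (Fin d)) :
    ⟪gradient (fun y => Real.log (f y)) x, v⟫_ℝ = (f x)⁻¹ * fderiv ℝ f x v := by
  simp [gradient, fderiv.log hf hfx, real_inner_smul_left]

end

theorem gf_svgd_stmt0_general (d : ℕ)
    (p ρ : EuclideanSpace ℝ (Fin d) → ℝ)
    (hp : ∀ y, 0 < p y) (hρ : ∀ y, 0 < ρ y)
    (x : EuclideanSpace ℝ (Fin d))
    (hpd : DifferentiableAt ℝ p x) (hρd : DifferentiableAt ℝ ρ x)
    (φ : EuclideanSpace ℝ (Fin d) → EuclideanSpace ℝ (Fin d))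
    (hφ : DifferentiableAt ℝ φ x)
    (w : EuclideanSpace ℝ (Fin d) → ℝ) (hw : w = fun y => ρ y / p y) :
    w x * (⟪gradient (fun y => Real.log (ρ y)) x, φ x⟫_ℝ + divg φ x)
      = ⟪gradient (fun y => Real.log (p y)) x, w x • φ x⟫_ℝ
        + divg (fun y => w y • φ y) x := by
  have hwd : DifferentiableAt ℝ w x := by
    subst hw
    fun_prop (disch := exact (hp x).ne')
  have hρ_eq : ρ = fun y => w y * p y := by
    funext y
    rw [hw, div_mul_cancel₀ _ (hp y).ne']
  have hρ_deriv : fderiv ℝ ρ x (φ x) = w x * fderiv ℝ p x (φ x) + p x * fderiv ℝ w x (φ x) := by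
    rw [hρ_eq, fderiv_fun_mul hwd hpd]
    simp
  rw [inner_gradient_log hρd (hρ x).ne', inner_gradient_log hpd (hp x).ne', divg_smul hwd hφ,
    map_smul, hρ_deriv, congrFun hρ_eq x]
  have hpx := (hp x).ne'
  have hwx : w x ≠ 0 := by rw [hw]; exact div_ne_zero (hρ x).ne' hpx
  field_simp
  ring

/-- Theorem 1 of the paper (pointwise identity):
`w(x)·(S_ρᵀφ)(x) = (S_pᵀ(w·φ))(x)` where `w = ρ/p`. -/
theorem gf_svgd_stmt0 (d : ℕ) (hd : 1 ≤ d)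
    (p ρ : EuclideanSpace ℝ (Fin d) → ℝ)
    (hp : ∀ y, 0 < p y) (hρ : ∀ y, 0 < ρ y)
    (x : EuclideanSpace ℝ (Fin d))
    (hpd : DifferentiableAt ℝ p x) (hρd : DifferentiableAt ℝ ρ x)
    (φ : EuclideanSpace ℝ (Fin d) → EuclideanSpace ℝ (Fin d))
    (hφ : DifferentiableAt ℝ φ x)
    (w : EuclideanSpace ℝ (Fin d) → ℝ) (hw : w = fun y => ρ y / p y) :
    w x * (⟪gradient (fun y => Real.log (ρ y)) x, φ x⟫_ℝ + divg φ x)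
      = ⟪gradient (fun y => Real.log (p y)) x, w x • φ x⟫_ℝ
        + divg (fun y => w y • φ y) x :=
  gf_svgd_stmt0_general d p ρ hp hρ x hpd hρd φ hφ w hw
end

section
/- Let d ≥ 1, let p, ρ : ℝ^d → ℝ be positive functions with ρ differentiable, and let k : ℝ^d → ℝ^d → ℝ be differentiable in its first argument. Define the kernel k'(y, x) = ρ(y)·ρ(x)·k(y, x). Then for all x, y ∈ ℝ^d, (1/p(y))·∇_y k'(y, x) = ρ(x)·(ρ(y)/p(y))·(∇log ρ(y)·k(y, x) + ∇_y k(y, x)). Consequently, the inverse-probability update Δx_i ∝ ∑_j (1/p(x_j)) ∇_{x_j} k'(x_j, x_i), which uses the constant surrogate ρ ≡ 1 with kernel k', reduces (up to the factor ρ(x_i) absorbed in the step size) to the gradient-free SVGD update ∑_j w(x_j)(∇log ρ(x_j) k(x_j,x_i) + ∇_{x_j} k(x_j,x_i)) with w = ρ/p and kernel k. -/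
/-!
With `x` fixed, `k'(·, x) = ρ(x) · (ρ · k(·, x))`, and the product rule with `∇ρ = ρ ∇log ρ`
gives `∇_y k'(y, x) = ρ(x) ρ(y) (k(y, x) ∇log ρ(y) + ∇_y k(y, x))`. Dividing by `p(y)`
gives the first identity, and summing it over the particles gives the second.
-/

section GradientCalculus

variable {F : Type*} [NormedAddCommGroup F] [InnerProductSpace ℝ F] [CompleteSpace F]
  {f g : F → ℝ} {f' g' x : F}

theorem HasGradientAt.mul (hf : HasGradientAt f f' x) (hg : HasGradientAt g g' x) :
    HasGradientAt (fun z => f z * g z) (f x • g' + g x • f') x := by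
  rw [hasGradientAt_iff_hasFDerivAt] at *
  simpa only [map_add, map_smul] using hf.fun_mul hg

theorem HasGradientAt.const_mul (hf : HasGradientAt f f' x) (c : ℝ) :
    HasGradientAt (fun z => c * f z) (c • f') x := by
  rw [hasGradientAt_iff_hasFDerivAt] at *
  simpa only [map_smul] using hf.const_mul c

theorem HasGradientAt.log (hf : HasGradientAt f f' x) (hx : f x ≠ 0) :
    HasGradientAt (fun z => Real.log (f z)) ((f x)⁻¹ • f') x := by
  rw [hasGradientAt_iff_hasFDerivAt] at *
  simpa only [map_smul] using hf.log hx

theorem hasGradientAt_mul_score {ρ : F → ℝ} (hρ : DifferentiableAt ℝ ρ x) (hρx : ρ x ≠ 0)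
    (hg : HasGradientAt g g' x) :
    HasGradientAt (fun z => ρ z * g z)
      (ρ x • (g x • gradient (fun z => Real.log (ρ z)) x + g')) x := by
  convert hρ.hasGradientAt.mul hg using 1
  rw [(hρ.hasGradientAt.log hρx).gradient, smul_add, smul_smul, smul_smul, add_comm]
  congr 2
  field_simp

end GradientCalculus

theorem gf_svgd_stmt8_general (d : ℕ)
    (p ρ : EuclideanSpace ℝ (Fin d) → ℝ)
    (hρ : ∀ y, 0 < ρ y) (hρd : Differentiable ℝ ρ)
    (k : EuclideanSpace ℝ (Fin d) → EuclideanSpace ℝ (Fin d) → ℝ)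
    (hk : ∀ y, Differentiable ℝ (fun z => k z y))
    (k' : EuclideanSpace ℝ (Fin d) → EuclideanSpace ℝ (Fin d) → ℝ)
    (hk' : k' = fun y x => ρ y * ρ x * k y x)
    (w : EuclideanSpace ℝ (Fin d) → ℝ) (hw : w = fun y => ρ y / p y) :
    (∀ x y, (1 / p y) • gradient (fun z => k' z x) y
        = (ρ x * (ρ y / p y)) •
            (k y x • gradient (fun z => Real.log (ρ z)) y
              + gradient (fun z => k z x) y))
    ∧ (∀ (n : ℕ) (xs : Fin n → EuclideanSpace ℝ (Fin d)) (i : Fin n),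
        ∑ j, (1 / p (xs j)) • gradient (fun z => k' z (xs i)) (xs j)
          = ρ (xs i) • ∑ j, w (xs j) •
              (k (xs j) (xs i) • gradient (fun z => Real.log (ρ z)) (xs j)
                + gradient (fun z => k z (xs i)) (xs j))) := by
  have pointwise : ∀ x y, (1 / p y) • gradient (fun z => k' z x) y
      = (ρ x * (ρ y / p y)) •
          (k y x • gradient (fun z => Real.log (ρ z)) y + gradient (fun z => k z x) y) := by
    intro x y
    have hk'x : (fun z => k' z x) = fun z => ρ x * (ρ z * k z x) := by
      funext z
      rw [hk']
      ring
    rw [hk'x, ((hasGradientAt_mul_score (hρd y) (hρ y).ne' (hk x y).hasGradientAt).const_mul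
      (ρ x)).gradient, smul_smul, smul_smul]
    congr 1
    ring
  refine ⟨pointwise, fun n xs i => ?_⟩
  rw [Finset.smul_sum]
  refine Finset.sum_congr rfl fun j _ => ?_
  rw [pointwise, hw, smul_smul]

/-- The inverse-probability update with the kernel `k'(y,x) = ρ(y)ρ(x)k(y,x)`
(i.e. the constant surrogate `ρ ≡ 1`) reduces, up to the factor `ρ(x_i)`
absorbed in the step size, to the gradient-free SVGD update with surrogate `ρ`
and kernel `k`. -/
theorem gf_svgd_stmt8 (d : ℕ) (hd : 1 ≤ d)
    (p ρ : EuclideanSpace ℝ (Fin d) → ℝ)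
    (hp : ∀ y, 0 < p y) (hρ : ∀ y, 0 < ρ y) (hρd : Differentiable ℝ ρ)
    (k : EuclideanSpace ℝ (Fin d) → EuclideanSpace ℝ (Fin d) → ℝ)
    (hk : ∀ y, Differentiable ℝ (fun z => k z y))
    (k' : EuclideanSpace ℝ (Fin d) → EuclideanSpace ℝ (Fin d) → ℝ)
    (hk' : k' = fun y x => ρ y * ρ x * k y x)
    (w : EuclideanSpace ℝ (Fin d) → ℝ) (hw : w = fun y => ρ y / p y) :
    (∀ x y, (1 / p y) • gradient (fun z => k' z x) y
        = (ρ x * (ρ y / p y)) •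
            (k y x • gradient (fun z => Real.log (ρ z)) y
              + gradient (fun z => k z x) y))
    ∧ (∀ (n : ℕ) (xs : Fin n → EuclideanSpace ℝ (Fin d)) (i : Fin n),
        ∑ j, (1 / p (xs j)) • gradient (fun z => k' z (xs i)) (xs j)
          = ρ (xs i) • ∑ j, w (xs j) •
              (k (xs j) (xs i) • gradient (fun z => Real.log (ρ z)) (xs j)
                + gradient (fun z => k z (xs i)) (xs j))) :=
  gf_svgd_stmt8_general d p ρ hρ hρd k hk k' hk' w hw
end
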